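/- arXiv:2201.00886 — 3 statements merged into one kernel-verified Lean document; each statement's English description precedes it below -/
import Mathlib

section
/- Let μ ∈ (0, ∞), ω > 0, e₁ > 0, e₂ > 0, δ₁ > 1, δ₂ > 1, ξ₁, ξ₂ ∈ ℝ, and let φ, ψ : ℝ × ℝ → ℝ be arbitrary functions. Define the maps Ψ₁₂(y, θ) = (y + φ(y, θ), θ + ξ₁ + μ·ψ(y, θ)), Loc₂(y, θ) = (μ^(δ₂−1)·y^(δ₂), θ − (ω/e₂)·log(μ·y)), Ψ₂₁(y, θ) = (y, θ + ξ₂), and Loc₁(y, θ) = (μ^(δ₁−1)·y^(δ₁), θ − (ω/e₁)·log(μ·y)), where all powers are real powers. Then for every (y, θ) ∈ ℝ² with y + φ(y, θ) > 0, the composition F = Loc₁ ∘ Ψ₂₁ ∘ Loc₂ ∘ Ψ₁₂ satisfies F(y, θ) = ( μ^(δ−1)·(y + φ(y, θ))^δ , θ + ξ + μ·ψ(y, θ) − ω·K_F·log μ − ω·K_F·log(y + φ(y, θ)) ), where δ = δ₁·δ₂, ξ = ξ₁ + ξ₂ and K_F = 1/e₂ + δ₂/e₁. -/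
open Real

/-- Lemma 6.1: explicit computation of the first return map
`F = Loc₁ ∘ Ψ₂₁ ∘ Loc₂ ∘ Ψ₁₂` to the cross section `Out(C₁)` in the
simplified model with `b₁ = b₂ = ε₀ = 1`, `μ₁ = μ > 0`, `μ₂ = 0`. -/
theorem first_return_map_F
    (μ ω e₁ e₂ δ₁ δ₂ ξ₁ ξ₂ : ℝ)
    (hμ : 0 < μ) (hω : 0 < ω) (he₁ : 0 < e₁) (he₂ : 0 < e₂)
    (hδ₁ : 1 < δ₁) (hδ₂ : 1 < δ₂)
    (φ ψ : ℝ × ℝ → ℝ)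
    (Ψ₁₂ : ℝ × ℝ → ℝ × ℝ)
    (hΨ₁₂ : Ψ₁₂ = fun p => (p.1 + φ p, p.2 + ξ₁ + μ * ψ p))
    (Loc₂ : ℝ × ℝ → ℝ × ℝ)
    (hLoc₂ : Loc₂ = fun p => (μ ^ (δ₂ - 1) * p.1 ^ δ₂, p.2 - ω / e₂ * Real.log (μ * p.1)))
    (Ψ₂₁ : ℝ × ℝ → ℝ × ℝ)
    (hΨ₂₁ : Ψ₂₁ = fun p => (p.1, p.2 + ξ₂))
    (Loc₁ : ℝ × ℝ → ℝ × ℝ)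
    (hLoc₁ : Loc₁ = fun p => (μ ^ (δ₁ - 1) * p.1 ^ δ₁, p.2 - ω / e₁ * Real.log (μ * p.1))) :
    ∀ y θ : ℝ, 0 < y + φ (y, θ) →
      (Loc₁ ∘ Ψ₂₁ ∘ Loc₂ ∘ Ψ₁₂) (y, θ) =
        (μ ^ (δ₁ * δ₂ - 1) * (y + φ (y, θ)) ^ (δ₁ * δ₂),
         θ + (ξ₁ + ξ₂) + μ * ψ (y, θ)
           - ω * (1 / e₂ + δ₂ / e₁) * Real.log μ
           - ω * (1 / e₂ + δ₂ / e₁) * Real.log (y + φ (y, θ))) := by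
  intro y θ hz
  subst hΨ₁₂ hLoc₂ hΨ₂₁ hLoc₁
  set z := y + φ (y, θ) with hzdef
  simp only [Function.comp_apply]
  have hμpos := hμ
  have hμ2 : (0:ℝ) < μ ^ (δ₂ - 1) := rpow_pos_of_pos hμ _
  have hz2 : (0:ℝ) < z ^ δ₂ := rpow_pos_of_pos hz _
  have key1 : μ ^ (δ₁ - 1) * (μ ^ (δ₂ - 1) * z ^ δ₂) ^ δ₁
      = μ ^ (δ₁ * δ₂ - 1) * z ^ (δ₁ * δ₂) := by
    rw [mul_rpow hμ2.le hz2.le]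
    rw [← Real.rpow_mul hμ.le, ← Real.rpow_mul hz.le]
    rw [show (δ₂ - 1) * δ₁ = δ₁ * δ₂ - 1 - (δ₁ - 1) by ring,
        show δ₂ * δ₁ = δ₁ * δ₂ by ring]
    rw [← mul_assoc, ← rpow_add hμ]
    ring_nf
  have hlogμz : Real.log (μ * z) = Real.log μ + Real.log z :=
    Real.log_mul hμ.ne' hz.ne'
  have hlog2 : Real.log (μ * (μ ^ (δ₂ - 1) * z ^ δ₂))
      = δ₂ * Real.log μ + δ₂ * Real.log z := by
    rw [Real.log_mul hμ.ne' (mul_pos hμ2 hz2).ne',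
        Real.log_mul hμ2.ne' hz2.ne', Real.log_rpow hμ, Real.log_rpow hz]
    ring
  refine Prod.ext ?_ ?_
  · simpa using key1
  · simp only
    rw [hlogμz, hlog2]
    field_simp
    ring
end

section
/- Let μ ∈ (0, ∞), ω > 0, e₁ > 0, e₂ > 0, δ₁ > 1, δ₂ > 1, ξ₁, ξ₂ ∈ ℝ, and let φ, ψ : ℝ × ℝ → ℝ be arbitrary functions. Define the maps Ψ₂₁(y, θ) = (y + φ(y, θ), θ + ξ₂ + μ·ψ(y, θ)), Loc₁(y, θ) = (μ^(δ₁−1)·y^(δ₁), θ − (ω/e₁)·log(μ·y)), Ψ₁₂(y, θ) = (y, θ + ξ₁), and Loc₂(y, θ) = (μ^(δ₂−1)·y^(δ₂), θ − (ω/e₂)·log(μ·y)), where all powers are real powers. Then for every (y, θ) ∈ ℝ² with y + φ(y, θ) > 0, the composition G = Loc₂ ∘ Ψ₁₂ ∘ Loc₁ ∘ Ψ₂₁ satisfies G(y, θ) = ( μ^(δ−1)·(y + φ(y, θ))^δ , θ + ξ + μ·ψ(y, θ) − ω·K_G·log μ − ω·K_G·log(y + φ(y, θ)) ), where δ = δ₁·δ₂,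 ξ = ξ₁ + ξ₂ and K_G = 1/e₁ + δ₁/e₂. -/
open Real

/-- Lemma 6.2: explicit computation of the first return map
`G = Loc₂ ∘ Ψ₁₂ ∘ Loc₁ ∘ Ψ₂₁` to the cross section `Out(C₂)` in the
simplified model with `b₁ = b₂ = ε₀ = 1`, `μ₁ = 0`, `μ₂ = μ > 0`. -/
theorem first_return_map_G
    (μ ω e₁ e₂ δ₁ δ₂ ξ₁ ξ₂ : ℝ)
    (hμ : 0 < μ) (hω : 0 < ω) (he₁ : 0 < e₁) (he₂ : 0 < e₂)
    (hδ₁ : 1 < δ₁) (hδ₂ : 1 < δ₂)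
    (φ ψ : ℝ × ℝ → ℝ)
    (Ψ₂₁ : ℝ × ℝ → ℝ × ℝ)
    (hΨ₂₁ : Ψ₂₁ = fun p => (p.1 + φ p, p.2 + ξ₂ + μ * ψ p))
    (Loc₁ : ℝ × ℝ → ℝ × ℝ)
    (hLoc₁ : Loc₁ = fun p => (μ ^ (δ₁ - 1) * p.1 ^ δ₁, p.2 - ω / e₁ * Real.log (μ * p.1)))
    (Ψ₁₂ : ℝ × ℝ → ℝ × ℝ)
    (hΨ₁₂ : Ψ₁₂ = fun p => (p.1, p.2 + ξ₁))
    (Loc₂ : ℝ × ℝ → ℝ × ℝ)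
    (hLoc₂ : Loc₂ = fun p => (μ ^ (δ₂ - 1) * p.1 ^ δ₂, p.2 - ω / e₂ * Real.log (μ * p.1))) :
    ∀ y θ : ℝ, 0 < y + φ (y, θ) →
      (Loc₂ ∘ Ψ₁₂ ∘ Loc₁ ∘ Ψ₂₁) (y, θ) =
        (μ ^ (δ₁ * δ₂ - 1) * (y + φ (y, θ)) ^ (δ₁ * δ₂),
         θ + (ξ₁ + ξ₂) + μ * ψ (y, θ)
           - ω * (1 / e₁ + δ₁ / e₂) * Real.log μ
           - ω * (1 / e₁ + δ₁ / e₂) * Real.log (y + φ (y, θ))) := by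
  intro y θ hy
  subst hΨ₂₁ hLoc₁ hΨ₁₂ hLoc₂
  set Y := y + φ (y, θ) with hY
  simp only [Function.comp_apply]
  have hμY : 0 < μ * Y := mul_pos hμ hy
  have h1 : 0 < μ ^ (δ₁ - 1) * Y ^ δ₁ :=
    mul_pos (rpow_pos_of_pos hμ _) (rpow_pos_of_pos hy _)
  rw [Prod.mk.injEq]
  constructor
  · -- first component
    show μ ^ (δ₂ - 1) * (μ ^ (δ₁ - 1) * Y ^ δ₁) ^ δ₂ = μ ^ (δ₁ * δ₂ - 1) * Y ^ (δ₁ * δ₂)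
    rw [mul_rpow (le_of_lt (rpow_pos_of_pos hμ _)) (le_of_lt (rpow_pos_of_pos hy _)),
      ← rpow_mul hμ.le, ← rpow_mul hy.le, ← mul_assoc, ← rpow_add hμ]
    congr 1
    ring
  · -- second component
    show θ + ξ₂ + μ * ψ (y, θ) - ω / e₁ * Real.log (μ * Y) + ξ₁
        - ω / e₂ * Real.log (μ * (μ ^ (δ₁ - 1) * Y ^ δ₁)) = _
    rw [Real.log_mul hμ.ne' hy.ne',
      Real.log_mul hμ.ne' h1.ne',
      Real.log_mul (rpow_pos_of_pos hμ _).ne' (rpow_pos_of_pos hy _).ne',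
      Real.log_rpow hμ, Real.log_rpow hy]
    ring
end

section
/- Let h : ℝ → ℝ be differentiable, let C ⊆ ℝ be a nonempty set with x ∈ C if and only if x + 2π ∈ C, and let b₀ > 0, δ > 0, λ₀ > 0 be constants. Assume h satisfies the Misiurewicz expansion property with respect to (C, b₀, δ, λ₀): for every θ ∈ ℝ and every n ≥ 1, if h^[k](θ) ∉ C for all 0 ≤ k ≤ n−1, then |deriv(h^[n])(θ)| ≥ b₀·δ·exp(λ₀·n), where h^[n] denotes the n-th iterate of h. Then for every a < b there exist n ∈ ℕ and x ∈ [a, b] such that h^[n](x) ∈ C. -/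
open Real

/-- Lemma 8.1: for a Misiurewicz-type map (lifted to `ℝ`, with `C` the lifted
`δ`-neighbourhood of the critical set, nonempty and `2π`-periodic), the forward
iterates of every nondegenerate interval eventually intersect `C`. -/
theorem iterates_meet_critical_set
    (h : ℝ → ℝ) (hd : Differentiable ℝ h)
    (C : Set ℝ) (hCne : C.Nonempty)
    (hCper : ∀ x : ℝ, x ∈ C ↔ x + 2 * π ∈ C)
    (b₀ δ lam₀ : ℝ) (hb₀ : 0 < b₀) (hδ : 0 < δ) (hlam₀ : 0 < lam₀)
    (hexp : ∀ θ : ℝ, ∀ n : ℕ, 1 ≤ n → (∀ k < n, h^[k] θ ∉ C) →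
      b₀ * δ * Real.exp (lam₀ * n) ≤ |deriv (h^[n]) θ|) :
    ∀ a b : ℝ, a < b → ∃ n : ℕ, ∃ x ∈ Set.Icc a b, h^[n] x ∈ C := by
  intro a b hab
  by_contra hcon
  push_neg at hcon
  -- every point of [a,b] avoids C along its whole forward orbit
  have havoid : ∀ θ ∈ Set.Icc a b, ∀ k : ℕ, h^[k] θ ∉ C := by
    intro θ hθ k
    exact hcon k θ hθ
  have hπ : (0:ℝ) < π := Real.pi_pos
  have hpos : 0 < b₀ * δ * (b - a) := mul_pos (mul_pos hb₀ hδ) (by linarith)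
  -- choose n large
  obtain ⟨m, hm⟩ := exists_nat_gt ((2 * π / (b₀ * δ * (b - a))) / lam₀)
  set n : ℕ := m + 1 with hn
  have hn1 : 1 ≤ n := Nat.le_add_left 1 m
  have hbig : 2 * π < b₀ * δ * Real.exp (lam₀ * n) * (b - a) := by
    have h1 : 2 * π / (b₀ * δ * (b - a)) < lam₀ * n := by
      have : 2 * π / (b₀ * δ * (b - a)) < lam₀ * m := by
        rw [div_lt_iff₀ hlam₀] at hm
        linarith [mul_comm lam₀ (m:ℝ)]
      have hmn : (m:ℝ) ≤ n := by exact_mod_cast Nat.le_succ m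
      nlinarith
    have h2 : lam₀ * n < Real.exp (lam₀ * n) := by
      have := Real.add_one_le_exp (lam₀ * n)
      linarith
    have h3 : 2 * π / (b₀ * δ * (b - a)) < Real.exp (lam₀ * n) := by linarith
    rw [div_lt_iff₀ hpos] at h3
    nlinarith
  -- derivative lower bound on [a,b]
  have hder : ∀ θ ∈ Set.Icc a b,
      b₀ * δ * Real.exp (lam₀ * n) ≤ |deriv (h^[n]) θ| := by
    intro θ hθ
    exact hexp θ n hn1 (fun k _ => havoid θ hθ k)
  have hdiff : Differentiable ℝ (h^[n]) := hd.iterate n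
  -- mean value theorem
  obtain ⟨c, hc, hcd⟩ := exists_deriv_eq_slope (h^[n]) hab
    (hdiff.continuous.continuousOn) (hdiff.differentiableOn)
  have hcIcc : c ∈ Set.Icc a b := Set.mem_Icc_of_Ioo hc
  have hgap : 2 * π < |h^[n] b - h^[n] a| := by
    have h1 := hder c hcIcc
    rw [hcd, abs_div, abs_of_pos (by linarith : (0:ℝ) < b - a)] at h1
    rw [le_div_iff₀ (by linarith : (0:ℝ) < b - a)] at h1
    linarith
  set A := h^[n] a
  set B := h^[n] b
  set lo := min A B
  set hi := max A B
  have hlohi : 2 * π < hi - lo := by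
    rcases le_total A B with hAB | hAB
    · simp only [lo, hi, min_eq_left hAB, max_eq_right hAB]
      rwa [abs_of_nonneg (by linarith)] at hgap
    · simp only [lo, hi, min_eq_right hAB, max_eq_left hAB]
      rwa [abs_of_nonpos (by linarith), neg_sub] at hgap
  -- find a point of C inside [lo, hi]
  obtain ⟨c₀, hc₀⟩ := hCne
  have hP : Function.Periodic (fun x => x ∈ C) (2 * π) := by
    intro x
    simpa using (propext (hCper x)).symm
  set k : ℤ := ⌈(lo - c₀) / (2 * π)⌉ with hk
  set y : ℝ := c₀ + (k : ℝ) * (2 * π) with hy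
  have hyC : y ∈ C := by
    have := (hP.int_mul k) c₀
    simpa [hy] using this.symm ▸ hc₀
  have h2π : (0:ℝ) < 2 * π := by linarith
  have hylo : lo ≤ y := by
    have := Int.le_ceil ((lo - c₀) / (2 * π))
    have h1 : lo - c₀ ≤ (k : ℝ) * (2 * π) := by
      rw [div_le_iff₀ h2π] at this
      linarith
    linarith
  have hyhi : y ≤ hi := by
    have := Int.ceil_lt_add_one ((lo - c₀) / (2 * π))
    have h1 : (k : ℝ) * (2 * π) < lo - c₀ + 2 * π := by
      have h2 : (k : ℝ) < (lo - c₀) / (2 * π) + 1 := by exact_mod_cast this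
      have h3 : (lo - c₀) / (2 * π) * (2 * π) = lo - c₀ :=
        div_mul_cancel₀ _ (ne_of_gt h2π)
      nlinarith
    linarith
  -- intermediate value theorem
  have hmem : y ∈ Set.uIcc A B := by
    rw [Set.mem_uIcc]
    rcases le_total A B with hAB | hAB
    · left
      constructor
      · simpa [lo, min_eq_left hAB] using hylo
      · simpa [hi, max_eq_right hAB] using hyhi
    · right
      constructor
      · simpa [lo, min_eq_right hAB] using hylo
      · simpa [hi, max_eq_left hAB] using hyhi
  have hsub := intermediate_value_uIcc (f := h^[n]) (a := a) (b := b)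
    (hdiff.continuous.continuousOn)
  obtain ⟨x, hx, hxy⟩ := hsub hmem
  rw [Set.uIcc_of_le (le_of_lt hab)] at hx
  exact havoid x hx n (hxy ▸ hyC)
end
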